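/- arXiv:1808.07545 — 5 statements merged into one kernel-verified Lean document; each statement's English description precedes it below -/
import Mathlib

section
/- For integers α ≥ 1, m ≥ 2, and μ > 0, the α-th order statistic mean waiting time T(α) = (1/(αμ))(H_{αm} - H_{αm-α}) is strictly decreasing in α, i.e., (1/(αμ))(H_{αm} - H_{αm-α}) > (1/((α+1)μ))(H_{(α+1)m} - H_{(α+1)m-(α+1)}). -/
/-- The ℓ-th harmonic number H_ℓ = ∑_{i=1}^ℓ 1/i. -/
noncomputable def H (n : ℕ) : ℝ := ∑ i ∈ Finset.range n, 1 / (i + 1 : ℝ)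

/-!
Write `m = k + 1`. Then `μ T(α) = (1/α) ∑_{j<α} 1/(αk + j + 1)` is the mean of `1/x` over the `α`
integers `αk + 1, …, αk + α`. Repeating every term of the `α`-term mean `α + 1` times and every term
of the `(α+1)`-term mean `α` times turns both into means of `α(α + 1)` terms, and the `t`-th of them
are `1/(αk + ⌊t/(α+1)⌋ + 1)` and `1/((α+1)k + ⌊t/α⌋ + 1)`. Since `k ≥ 1`, the first is strictly larger.
-/

open Finset

theorem Finset.sum_range_mul_div {M : Type*} [AddCommMonoid M] (f : ℕ → M) (a b : ℕ) :
    ∑ t ∈ range (a * b), f (t / b) = b • ∑ j ∈ range a, f j := by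
  induction a with
  | zero => simp
  | succ a ih =>
    rcases b.eq_zero_or_pos with rfl | hb
    · simp
    have hblock : ∀ i ∈ range b, f ((a * b + i) / b) = f a := fun i hi => by
      rw [mul_comm a b, Nat.mul_add_div hb, Nat.div_eq_of_lt (mem_range.1 hi), add_zero]
    rw [Nat.succ_mul, sum_range_add, ih, sum_congr rfl hblock, sum_range_succ, sum_const,
      card_range, smul_add]

theorem H_add_sub_H (k n : ℕ) : H (k + n) - H k = ∑ j ∈ range n, 1 / ((k : ℝ) + j + 1) := by
  simp only [H, sum_range_add, add_sub_cancel_left, Nat.cast_add, add_assoc]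

theorem mul_sum_range_succ_inv_lt (a k : ℕ) (ha : 1 ≤ a) (hk : 1 ≤ k) :
    (a : ℝ) * ∑ j ∈ range (a + 1), 1 / (((a + 1 : ℕ) : ℝ) * k + j + 1) <
      ((a + 1 : ℕ) : ℝ) * ∑ j ∈ range a, 1 / ((a : ℝ) * k + j + 1) := by
  have hsmall := sum_range_mul_div (fun j : ℕ => 1 / ((a : ℝ) * k + j + 1)) a (a + 1)
  have hlarge := sum_range_mul_div (fun j : ℕ => 1 / (((a + 1 : ℕ) : ℝ) * k + j + 1)) (a + 1) a
  rw [nsmul_eq_mul] at hsmall hlarge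
  rw [← hsmall, ← hlarge, mul_comm a]
  refine sum_lt_sum_of_nonempty (nonempty_range_iff.2 (by positivity)) fun t _ => ?_
  have hdiv : t / (a + 1) ≤ t / a := Nat.div_le_div_left (by omega) (by omega)
  have hlt : a * k + t / (a + 1) < (a + 1) * k + t / a := by nlinarith
  apply one_div_lt_one_div_of_lt (by positivity)
  exact_mod_cast Nat.add_lt_add_right hlt 1

theorem waiting_time_strictly_decreasing (α m : ℕ) (μ : ℝ)
    (hα : 1 ≤ α) (hm : 2 ≤ m) (hμ : 0 < μ) :
    (1 / (α * μ)) * (H (α * m) - H (α * m - α)) >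
      (1 / ((α + 1) * μ)) * (H ((α + 1) * m) - H ((α + 1) * m - (α + 1))) := by
  obtain ⟨k, rfl⟩ : ∃ k, m = k + 1 := ⟨m - 1, by omega⟩
  have hsplit : ∀ a : ℕ, a * (k + 1) - a = a * k ∧ a * (k + 1) = a * k + a := fun a =>
    ⟨by rw [Nat.mul_succ, Nat.add_sub_cancel], Nat.mul_succ a k⟩
  rw [(hsplit α).1, (hsplit α).2, (hsplit (α + 1)).1, (hsplit (α + 1)).2, H_add_sub_H, H_add_sub_H]
  have key := mul_sum_range_succ_inv_lt α k hα (by omega)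
  push_cast at key ⊢
  rw [gt_iff_lt, one_div_mul_eq_div, one_div_mul_eq_div, div_lt_div_iff₀ (by positivity) (by positivity)]
  nlinarith [mul_lt_mul_of_pos_left key hμ]
end

section
/- For integers αm ≥ α ≥ 1, μ > 0 and p ∈ [0,1]: ∑_{φ=α}^{αm} μ(φ - α + 1) C(αm, φ)(1-p)^φ p^{αm-φ} ≥ μ(αm - α + 1)(1-p)^α. -/
lemma choose_aux (n α j : ℕ) (hα1 : 1 ≤ α) (hα : α ≤ n) (hj : j ≤ n - α) :
    (n - α + 1) * Nat.choose (n - α) j ≤ (j + 1) * Nat.choose n (α + j) := by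
  have h1 : (n - α + 1) * Nat.choose (n - α) j
      = Nat.choose (n - α + 1) (j + 1) * (j + 1) := Nat.add_one_mul_choose_eq (n - α) j
  rw [h1, mul_comm]
  apply Nat.mul_le_mul_left
  have h2 : Nat.choose (n - α + 1) (j + 1) = Nat.choose (n - α + 1) (n - α - j) := by
    have h := Nat.choose_symm (show n - α - j ≤ n - α + 1 by omega)
    rw [show (n - α + 1) - (n - α - j) = j + 1 by omega] at h
    exact h
  rw [h2]
  calc Nat.choose (n - α + 1) (n - α - j) ≤ Nat.choose n (n - α - j) :=
        Nat.choose_le_choose (n - α - j) (show n - α + 1 ≤ n by omega)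
    _ = Nat.choose n (α + j) := by
        have h := Nat.choose_symm (show α + j ≤ n by omega)
        rw [show n - (α + j) = n - α - j by omega] at h
        exact h

theorem prob_access_lower_bound (α m : ℕ) (μ p : ℝ)
    (hα : 1 ≤ α) (hαm : α ≤ α * m) (hμ : 0 < μ) (hp0 : 0 ≤ p) (hp1 : p ≤ 1) :
    ∑ φ ∈ Finset.Icc α (α * m),
        μ * ((φ : ℝ) - α + 1) * ((α * m).choose φ : ℝ) * (1 - p) ^ φ * p ^ (α * m - φ) ≥
      μ * ((α : ℝ) * m - α + 1) * (1 - p) ^ α := by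
  set n := α * m with hn
  have h1p : (0:ℝ) ≤ 1 - p := by linarith
  have hcast : ((α : ℝ) * m - α + 1) = ((n - α + 1 : ℕ) : ℝ) := by
    have : (n : ℝ) = (α : ℝ) * m := by push_cast [hn]; ring
    push_cast [Nat.cast_sub hαm]
    linarith
  have hbin : ((1 - p) + p) ^ (n - α)
      = ∑ j ∈ Finset.range (n - α + 1),
          (1 - p) ^ j * p ^ (n - α - j) * ((n - α).choose j : ℝ) := add_pow _ _ _
  have hRHS : μ * ((α : ℝ) * m - α + 1) * (1 - p) ^ α
      = ∑ j ∈ Finset.range (n + 1 - α),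
          μ * ((n - α + 1 : ℕ) : ℝ) * ((n - α).choose j : ℝ) * (1 - p) ^ (α + j)
            * p ^ (n - α - j) := by
    have hr : n + 1 - α = n - α + 1 := by omega
    rw [hcast, hr]
    have : μ * ((n - α + 1 : ℕ) : ℝ) * (1 - p) ^ α
        = μ * ((n - α + 1 : ℕ) : ℝ) * (1 - p) ^ α * ((1 - p) + p) ^ (n - α) := by
      rw [show (1 - p) + p = 1 by ring]
      simp
    rw [this, hbin, Finset.mul_sum]
    apply Finset.sum_congr rfl
    intro j _
    rw [pow_add]
    ring
  rw [hRHS, ← Finset.Ico_add_one_right_eq_Icc, Finset.sum_Ico_eq_sum_range]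
  apply Finset.sum_le_sum
  intro j hj
  have hjle : j ≤ n - α := by
    have := Finset.mem_range.mp hj
    omega
  have hexp : n - (α + j) = n - α - j := by omega
  have hc1 : ((α + j : ℕ) : ℝ) - α + 1 = ((j + 1 : ℕ) : ℝ) := by push_cast; ring
  rw [hexp, hc1]
  have key : ((n - α + 1) * (n - α).choose j : ℕ) ≤ ((j + 1) * n.choose (α + j) : ℕ) :=
    choose_aux n α j hα hαm hjle
  have key' : ((n - α + 1 : ℕ) : ℝ) * ((n - α).choose j : ℝ)
      ≤ ((j + 1 : ℕ) : ℝ) * (n.choose (α + j) : ℝ) := by exact_mod_cast key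
  have hnn : (0:ℝ) ≤ (1 - p) ^ (α + j) * p ^ (n - α - j) :=
    mul_nonneg (pow_nonneg h1p _) (pow_nonneg hp0 _)
  calc μ * ((n - α + 1 : ℕ) : ℝ) * ((n - α).choose j : ℝ) * (1 - p) ^ (α + j) * p ^ (n - α - j)
      = μ * (((n - α + 1 : ℕ) : ℝ) * ((n - α).choose j : ℝ))
          * ((1 - p) ^ (α + j) * p ^ (n - α - j)) := by ring
    _ ≤ μ * (((j + 1 : ℕ) : ℝ) * (n.choose (α + j) : ℝ))
          * ((1 - p) ^ (α + j) * p ^ (n - α - j)) := by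
        apply mul_le_mul_of_nonneg_right _ hnn
        exact mul_le_mul_of_nonneg_left key' hμ.le
    _ = μ * ((j + 1 : ℕ) : ℝ) * (n.choose (α + j) : ℝ) * (1 - p) ^ (α + j)
          * p ^ (n - α - j) := by ring
end

section
/- For integers αm ≥ α ≥ 1, μ > 0 and p ∈ [0,1]: ∑_{φ=α}^{αm} μφ C(αm, φ)(1-p)^φ p^{αm-φ} ≤ μ α m C(αm-1, α-1)(1-p)^α. -/
/-!
Write `n = α m` and `q = 1 - p`. Absorbing the factor `φ` gives `φ C(n, φ) = n C(n-1, φ-1)`, and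
choosing the `φ-1` elements by first fixing `α-1` of them bounds
`C(n-1, φ-1) ≤ C(n-1, α-1) C(n-α, φ-α)`. What remains is the binomial sum
`∑_φ C(n-α, φ-α) q^φ p^(n-φ) = q^α (q+p)^(n-α) = q^α`.
-/

open Finset

theorem Nat.choose_le_choose_mul_choose {n k s : ℕ} (hsk : s ≤ k) :
    n.choose k ≤ n.choose s * (n - s).choose (k - s) :=
  Nat.choose_mul hsk ▸ Nat.le_mul_of_pos_right _ (Nat.choose_pos hsk)

theorem Nat.mul_choose_eq_mul_choose_pred {n k : ℕ} (hk : 1 ≤ k) (hn : 1 ≤ n) :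
    k * n.choose k = n * (n - 1).choose (k - 1) := by
  obtain ⟨k, rfl⟩ := Nat.exists_eq_add_of_le' hk
  obtain ⟨n, rfl⟩ := Nat.exists_eq_add_of_le' hn
  simp only [Nat.add_sub_cancel]
  rw [Nat.add_one_mul_choose_eq, Nat.mul_comm]

theorem Nat.mul_choose_le_mul_choose_mul_choose {n k j : ℕ} (hk : 1 ≤ k) (hkj : k ≤ j)
    (hjn : j ≤ n) :
    j * n.choose j ≤ n * (n - 1).choose (k - 1) * (n - k).choose (j - k) := by
  rw [Nat.mul_choose_eq_mul_choose_pred (hk.trans hkj) (hk.trans (hkj.trans hjn)), Nat.mul_assoc]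
  refine Nat.mul_le_mul_left _ ?_
  have := Nat.choose_le_choose_mul_choose (n := n - 1) (Nat.sub_le_sub_right hkj 1)
  rwa [Nat.sub_sub_sub_cancel_right hk, Nat.sub_sub_sub_cancel_right hk] at this

theorem sum_Icc_choose_sub_mul_pow_mul_pow {R : Type*} [CommSemiring R] (x y : R) {k n : ℕ}
    (hkn : k ≤ n) :
    ∑ j ∈ Icc k n, ((n - k).choose (j - k) : R) * x ^ j * y ^ (n - j) =
      x ^ k * (x + y) ^ (n - k) := by
  obtain ⟨r, rfl⟩ := Nat.exists_eq_add_of_le hkn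
  rw [← Ico_add_one_right_eq_Icc, sum_Ico_eq_sum_range, Nat.add_sub_cancel_left, add_pow, mul_sum]
  refine sum_congr (by congr 1; omega) fun j _ => ?_
  simp only [Nat.add_sub_cancel_left, Nat.add_sub_add_left, pow_add]
  ring

theorem prob_access_upper_bound (α m : ℕ) (μ p : ℝ)
    (hα : 1 ≤ α) (hαm : α ≤ α * m) (hμ : 0 < μ) (hp0 : 0 ≤ p) (hp1 : p ≤ 1) :
    ∑ φ ∈ Finset.Icc α (α * m),
        μ * (φ : ℝ) * ((α * m).choose φ : ℝ) * (1 - p) ^ φ * p ^ (α * m - φ) ≤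
      μ * α * m * ((α * m - 1).choose (α - 1) : ℝ) * (1 - p) ^ α := by
  set n := α * m with hn
  have hq : 0 ≤ 1 - p := sub_nonneg.2 hp1
  calc ∑ φ ∈ Icc α n, μ * (φ : ℝ) * (n.choose φ : ℝ) * (1 - p) ^ φ * p ^ (n - φ)
      ≤ ∑ φ ∈ Icc α n, μ * (n * (n - 1).choose (α - 1)) *
          ((n - α).choose (φ - α) * (1 - p) ^ φ * p ^ (n - φ)) := by
        refine sum_le_sum fun φ hφ => ?_
        obtain ⟨hαφ, hφn⟩ := mem_Icc.1 hφ
        have hchoose : (φ : ℝ) * n.choose φ ≤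
            n * (n - 1).choose (α - 1) * (n - α).choose (φ - α) := by
          exact_mod_cast Nat.mul_choose_le_mul_choose_mul_choose hα hαφ hφn
        calc μ * (φ : ℝ) * n.choose φ * (1 - p) ^ φ * p ^ (n - φ)
            = μ * (φ * n.choose φ) * ((1 - p) ^ φ * p ^ (n - φ)) := by ring
          _ ≤ μ * (n * (n - 1).choose (α - 1) * (n - α).choose (φ - α)) *
                ((1 - p) ^ φ * p ^ (n - φ)) := by gcongr
          _ = _ := by ring
    _ = μ * (n * (n - 1).choose (α - 1)) * ((1 - p) ^ α * (1 - p + p) ^ (n - α)) := by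
        rw [← mul_sum, sum_Icc_choose_sub_mul_pow_mul_pow _ _ hαm]
    _ = μ * α * m * ((n - 1).choose (α - 1) : ℝ) * (1 - p) ^ α := by
        rw [sub_add_cancel, one_pow, hn]
        push_cast
        ring
end

section
/- Let α ≥ 2, m ≥ 1, N ≥ αm, μ > 0, and let r be an integer with (m/(αm-α+1))^{1/(α-1)} (N - α + 1) + α - 1 < r ≤ N. Then μ_s(α) = (μα/C(N,r)) ∑_{φ=α}^{min(r,αm)} (1/(H_φ - H_{φ-α})) C(αm, φ) C(N-αm, r-φ) > μ_s(1) = μ m C(N-1, r-1)/C(N,r). -/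
/-! Each H_φ - H_{φ-α} is a sum of α terms, each at most 1/(φ-α+1), so the weight
α/(H_φ - H_{φ-α}) is at least φ-α+1. Against the hypergeometric weights C(αm,φ) C(N-αm,r-φ),
whose total is C(N,r) (Vandermonde) and whose first moment is αm C(N-1,r-1), this gives
α ∑ ≥ αm C(N-1,r-1) - (α-1) C(N,r); the terms with φ < α left out of the sum only contribute
negatively. The claim is thus reduced to C(N,r) < m C(N-1,r-1), that is N < m r, which follows
from the lower bound on r because Bernoulli's inequality m^α ≥ αm - α + 1 makes the
(α-1)-th root in it at least 1/m. -/

open Finset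

lemma H_sub_H_eq_sum_Ico {a b : ℕ} (h : a ≤ b) : H b - H a = ∑ i ∈ Ico a b, 1 / (i + 1 : ℝ) :=
  (sum_Ico_eq_sub _ h).symm

lemma H_sub_H_pos {a b : ℕ} (h : a < b) : 0 < H b - H a := by
  rw [H_sub_H_eq_sum_Ico h.le]
  exact sum_pos (fun i _ => by positivity) (nonempty_Ico.mpr h)

lemma H_sub_H_le {a b : ℕ} (h : a ≤ b) : H b - H a ≤ ((b - a : ℕ) : ℝ) / (a + 1) := by
  rw [H_sub_H_eq_sum_Ico h]
  calc ∑ i ∈ Ico a b, 1 / (i + 1 : ℝ) ≤ ∑ _i ∈ Ico a b, 1 / (a + 1 : ℝ) :=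
        sum_le_sum fun i hi => by gcongr; exact_mod_cast (mem_Ico.mp hi).1
    _ = ((b - a : ℕ) : ℝ) / (a + 1) := by rw [sum_const, Nat.card_Ico, nsmul_eq_mul, mul_one_div]

lemma sub_add_one_le_div_H_sub_H {α φ : ℕ} (hα : 0 < α) (hφ : α ≤ φ) :
    (φ - α + 1 : ℝ) ≤ α / (H φ - H (φ - α)) := by
  have hpos : 0 < H φ - H (φ - α) := H_sub_H_pos (by omega)
  have hle := H_sub_H_le (Nat.sub_le φ α)
  rw [Nat.sub_sub_self hφ, Nat.cast_sub hφ] at hle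
  have hφα : (0 : ℝ) < φ - α + 1 := by
    have : (α : ℝ) ≤ φ := by exact_mod_cast hφ
    linarith
  rw [le_div_iff₀ hpos]
  rwa [le_div_iff₀ hφα, mul_comm] at hle

lemma Nat.sum_range_choose_mul_choose (a b n : ℕ) :
    ∑ k ∈ range (n + 1), a.choose k * b.choose (n - k) = (a + b).choose n := by
  rw [Nat.add_choose_eq, Nat.sum_antidiagonal_eq_sum_range_succ_mk]

lemma Nat.sum_range_mul_choose_mul_choose {a n : ℕ} (b : ℕ) (ha : 0 < a) (hn : 0 < n) :
    ∑ k ∈ range (n + 1), k * (a.choose k * b.choose (n - k)) = a * (a - 1 + b).choose (n - 1) := by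
  obtain ⟨a, rfl⟩ := Nat.exists_eq_add_one.mpr ha
  obtain ⟨n, rfl⟩ := Nat.exists_eq_add_one.mpr hn
  rw [Nat.add_sub_cancel, Nat.add_sub_cancel, ← Nat.sum_range_choose_mul_choose, mul_sum,
    sum_range_succ', zero_mul, add_zero]
  refine sum_congr rfl fun k _ => ?_
  rw [Nat.add_sub_add_right, ← mul_assoc, ← mul_assoc, mul_comm (k + 1),
    ← Nat.add_one_mul_choose_eq]

lemma sum_range_sub_add_one_mul_le_sum_Icc (a b n α : ℕ) :
    ∑ k ∈ range (n + 1), ((k - α + 1 : ℝ) * (a.choose k * b.choose (n - k))) ≤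
      ∑ k ∈ Icc α (min n a), ((k - α + 1 : ℝ) * (a.choose k * b.choose (n - k))) := by
  have hsub : Icc α (min n a) ⊆ range (n + 1) := fun k hk => by
    simp only [mem_Icc, mem_range] at hk ⊢
    omega
  rw [← sum_sdiff hsub, add_le_iff_nonpos_left]
  refine sum_nonpos fun k hk => ?_
  simp only [mem_sdiff, mem_range, mem_Icc, not_and_or, not_le] at hk
  rcases hk with ⟨hkn, hkα | hka⟩
  · have : (k + 1 : ℝ) ≤ α := by exact_mod_cast hkα
    exact mul_nonpos_of_nonpos_of_nonneg (by linarith) (by positivity)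
  · simp [Nat.choose_eq_zero_of_lt (show a < k by omega)]

lemma sub_mul_choose_le_mul_sum_Icc {N r α a : ℕ} (hα : 0 < α) (ha : 0 < a) (haN : a ≤ N)
    (hr : 0 < r) :
    (a * (N - 1).choose (r - 1) : ℝ) - (α - 1) * N.choose r ≤
      α * ∑ φ ∈ Icc α (min r a),
        1 / (H φ - H (φ - α)) * (a.choose φ : ℝ) * ((N - a).choose (r - φ) : ℝ) := by
  have hsum : ∑ k ∈ range (r + 1), (a.choose k * (N - a).choose (r - k) : ℝ) = N.choose r := by
    have := Nat.sum_range_choose_mul_choose a (N - a) r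
    rw [Nat.add_sub_cancel' haN] at this
    exact_mod_cast this
  have hmean : ∑ k ∈ range (r + 1), (k * (a.choose k * (N - a).choose (r - k)) : ℝ) =
      a * (N - 1).choose (r - 1) := by
    rw [show N - 1 = a - 1 + (N - a) by omega]
    exact_mod_cast Nat.sum_range_mul_choose_mul_choose (N - a) ha hr
  calc (a * (N - 1).choose (r - 1) : ℝ) - (α - 1) * N.choose r
      = ∑ k ∈ range (r + 1), ((k - α + 1 : ℝ) * (a.choose k * (N - a).choose (r - k))) := by
        simp only [sub_add, sub_mul, sum_sub_distrib, ← mul_sum, hsum, hmean]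
    _ ≤ ∑ φ ∈ Icc α (min r a), ((φ - α + 1 : ℝ) * (a.choose φ * (N - a).choose (r - φ))) :=
        sum_range_sub_add_one_mul_le_sum_Icc ..
    _ ≤ α * ∑ φ ∈ Icc α (min r a),
          1 / (H φ - H (φ - α)) * (a.choose φ : ℝ) * ((N - a).choose (r - φ) : ℝ) := by
        rw [mul_sum]
        refine sum_le_sum fun φ hφ => ?_
        simp only [← mul_assoc, mul_one_div]
        gcongr
        exact sub_add_one_le_div_H_sub_H hα (mem_Icc.mp hφ).1

lemma one_div_le_rpow_div {α m : ℕ} (hα : 2 ≤ α) (hm : 1 ≤ m) :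
    1 / (m : ℝ) ≤ ((m : ℝ) / ((α : ℝ) * m - α + 1)) ^ ((1 : ℝ) / ((α : ℝ) - 1)) := by
  have hα' : (2 : ℝ) ≤ α := by exact_mod_cast hα
  have hm' : (1 : ℝ) ≤ m := by exact_mod_cast hm
  have hden : 0 < (α : ℝ) * m - α + 1 := by nlinarith
  have bernoulli : (α : ℝ) * m - α + 1 ≤ (m : ℝ) ^ α := by
    have := one_add_mul_le_pow (show (-2 : ℝ) ≤ m - 1 by linarith) α
    rw [add_sub_cancel] at this
    linarith
  rw [one_div ((α : ℝ) - 1), Real.le_rpow_inv_iff_of_pos (by positivity) (by positivity)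
    (by linarith), one_div, Real.inv_rpow (by positivity), Real.rpow_sub_one (by positivity),
    Real.rpow_natCast, inv_div]
  exact div_le_div_of_nonneg_left (by positivity) hden bernoulli

lemma lt_mul_of_rpow_threshold_lt {N r α m : ℕ} (hα : 2 ≤ α) (hm : 1 ≤ m) (hαN : α ≤ N)
    (hr : ((m : ℝ) / ((α : ℝ) * m - α + 1)) ^ ((1 : ℝ) / ((α : ℝ) - 1)) *
        ((N : ℝ) - α + 1) + α - 1 < (r : ℝ)) : N < m * r := by
  have hc := one_div_le_rpow_div hα hm
  set c := ((m : ℝ) / ((α : ℝ) * m - α + 1)) ^ ((1 : ℝ) / ((α : ℝ) - 1))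
  have hm' : (1 : ℝ) ≤ m := by exact_mod_cast hm
  have hα' : (2 : ℝ) ≤ α := by exact_mod_cast hα
  have hαN' : (α : ℝ) ≤ N := by exact_mod_cast hαN
  have hmc : 1 ≤ m * c := by rwa [div_le_iff₀ (by positivity), mul_comm] at hc
  have : (N : ℝ) < m * r := by nlinarith
  exact_mod_cast this

lemma Nat.choose_lt_mul_choose_sub_one {N r m : ℕ} (hrN : r ≤ N) (hr : 0 < r) (h : N < m * r) :
    N.choose r < m * (N - 1).choose (r - 1) := by
  have hN : 0 < N := hr.trans_le hrN
  have key : N * (N - 1).choose (r - 1) = r * N.choose r := by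
    obtain ⟨N, rfl⟩ := Nat.exists_eq_add_one.mpr hN
    obtain ⟨r, rfl⟩ := Nat.exists_eq_add_one.mpr hr
    rw [Nat.add_sub_cancel, Nat.add_sub_cancel, Nat.add_one_mul_choose_eq, mul_comm]
  refine Nat.lt_of_mul_lt_mul_left (a := N) ?_
  calc N * N.choose r < m * r * N.choose r :=
        Nat.mul_lt_mul_of_pos_right h (Nat.choose_pos hrN)
    _ = N * (m * (N - 1).choose (r - 1)) := by rw [mul_left_comm, key, mul_assoc]

theorem fixed_access_alpha_better_than_one (N r α m : ℕ) (μ : ℝ)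
    (hα : 2 ≤ α) (hm : 1 ≤ m) (hN : α * m ≤ N) (hμ : 0 < μ)
    (hr : ((m : ℝ) / ((α : ℝ) * m - α + 1)) ^ ((1 : ℝ) / ((α : ℝ) - 1)) *
        ((N : ℝ) - α + 1) + α - 1 < (r : ℝ))
    (hrN : r ≤ N) :
    (μ * α / (N.choose r : ℝ)) *
        ∑ φ ∈ Finset.Icc α (min r (α * m)),
          (1 / (H φ - H (φ - α))) * ((α * m).choose φ : ℝ) * ((N - α * m).choose (r - φ) : ℝ) >
      μ * m * ((N - 1).choose (r - 1) : ℝ) / (N.choose r : ℝ) := by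
  have hαm : α ≤ α * m := Nat.le_mul_of_pos_right α hm
  have hNmr : N < m * r := lt_mul_of_rpow_threshold_lt hα hm (hαm.trans hN) hr
  have hr0 : 0 < r := Nat.pos_of_ne_zero fun h => by simp [h] at hNmr
  have hY : (0 : ℝ) < N.choose r := by exact_mod_cast Nat.choose_pos hrN
  have hYX : (N.choose r : ℝ) < m * (N - 1).choose (r - 1) := by
    exact_mod_cast Nat.choose_lt_mul_choose_sub_one hrN hr0 hNmr
  have hS := sub_mul_choose_le_mul_sum_Icc (α := α) (a := α * m) (by omega) (by omega) hN hr0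
  have hα' : (2 : ℝ) ≤ α := by exact_mod_cast hα
  rw [gt_iff_lt, div_mul_eq_mul_div, div_lt_div_iff_of_pos_right hY, mul_assoc, mul_assoc]
  push_cast at hS
  refine mul_lt_mul_of_pos_left ?_ hμ
  nlinarith [mul_lt_mul_of_pos_left hYX (show (0 : ℝ) < α - 1 by linarith)]
end

section
/- For integers m ≥ 2, α ≥ 1: (1/α)(H_{αm} - H_{αm-α}) > (1/(α+1))(H_{(α+1)m} - H_{(α+1)(m-1)}). -/
lemma H_add (a b : ℕ) :
    H (a + b) = H a + ∑ i ∈ Finset.range b, 1 / ((a : ℝ) + i + 1) := by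
  unfold H
  rw [Finset.sum_range_add]
  congr 1
  apply Finset.sum_congr rfl
  intro i _
  push_cast
  ring_nf

lemma sum_group (c n : ℕ) (hc : 0 < c) (f : ℕ → ℝ) :
    ∑ i ∈ Finset.range (c * n), f (i / c) = c • ∑ j ∈ Finset.range n, f j := by
  induction n with
  | zero => simp
  | succ n ih =>
    rw [Nat.mul_succ, Finset.sum_range_add, ih, Finset.sum_range_succ, smul_add]
    congr 1
    have h : ∀ i ∈ Finset.range c, f ((c * n + i) / c) = f n := by
      intro i hi
      rw [Finset.mem_range] at hi
      rw [Nat.mul_add_div hc, Nat.div_eq_of_lt hi, add_zero]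
    rw [Finset.sum_congr rfl h, Finset.sum_const, Finset.card_range]

theorem harmonic_difference_inequality (α m : ℕ) (hα : 1 ≤ α) (hm : 2 ≤ m) :
    (1 / (α : ℝ)) * (H (α * m) - H (α * m - α)) >
      (1 / ((α : ℝ) + 1)) * (H ((α + 1) * m) - H ((α + 1) * (m - 1))) := by
  have hαpos : 0 < α := hα
  have hq : 1 ≤ m - 1 := by omega
  have e1' : α * m = α * (m - 1) + α := by
    conv_lhs => rw [show m = (m - 1) + 1 from by omega]
    rw [Nat.mul_add, Nat.mul_one]
  have e1 : α * m - α = α * (m - 1) := by omega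
  have e2 : (α + 1) * m = (α + 1) * (m - 1) + (α + 1) := by
    conv_lhs => rw [show m = (m - 1) + 1 from by omega]
    rw [Nat.mul_add, Nat.mul_one]
  set f1 : ℕ → ℝ := fun j => 1 / ((α * (m - 1) : ℕ) + (j : ℝ) + 1) with hf1
  set f2 : ℕ → ℝ := fun j => 1 / (((α + 1) * (m - 1) : ℕ) + (j : ℝ) + 1) with hf2
  have d1 : H (α * m) - H (α * m - α) = ∑ j ∈ Finset.range α, f1 j := by
    rw [e1, e1', H_add, add_sub_cancel_left]
  have d2 : H ((α + 1) * m) - H ((α + 1) * (m - 1)) = ∑ j ∈ Finset.range (α + 1), f2 j := by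
    rw [e2, H_add, add_sub_cancel_left]
  rw [d1, d2]
  have hαR : (0 : ℝ) < α := by exact_mod_cast hαpos
  have hα1R : (0 : ℝ) < (α : ℝ) + 1 := by linarith
  rw [gt_iff_lt, one_div_mul_eq_div, one_div_mul_eq_div, div_lt_div_iff₀ hα1R hαR]
  have g1 : (∑ j ∈ Finset.range α, f1 j) * ((α : ℝ) + 1)
      = ∑ i ∈ Finset.range (α * (α + 1)), f1 (i / (α + 1)) := by
    rw [mul_comm α (α + 1), sum_group (α + 1) α (by omega) f1, nsmul_eq_mul]
    push_cast
    ring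
  have g2 : (∑ j ∈ Finset.range (α + 1), f2 j) * (α : ℝ)
      = ∑ i ∈ Finset.range (α * (α + 1)), f2 (i / α) := by
    rw [sum_group α (α + 1) hαpos f2, nsmul_eq_mul, mul_comm]
  rw [g1, g2]
  have hmul : (α + 1) * (m - 1) = α * (m - 1) + (m - 1) := by ring
  have key : ∀ i : ℕ, α * (m - 1) + i / (α + 1) + 1 ≤ (α + 1) * (m - 1) + i / α + 1 := by
    intro i
    have h1 : i / (α + 1) ≤ i / α := Nat.div_le_div_left (by omega) hαpos
    omega
  have pos : ∀ i : ℕ, (0 : ℝ) < ((α * (m - 1) : ℕ) : ℝ) + ((i / (α + 1) : ℕ) : ℝ) + 1 := by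
    intro i
    positivity
  apply Finset.sum_lt_sum
  · intro i _
    simp only [hf1, hf2]
    apply one_div_le_one_div_of_le (pos i)
    have h := key i
    push_cast
    exact_mod_cast h
  · refine ⟨0, Finset.mem_range.mpr (by positivity), ?_⟩
    simp only [hf1, hf2]
    apply one_div_lt_one_div_of_lt (pos 0)
    have hlt : α * (m - 1) + 0 / (α + 1) + 1 < (α + 1) * (m - 1) + 0 / α + 1 := by
      simp only [Nat.zero_div]
      omega
    push_cast
    exact_mod_cast hlt
end
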